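/- arXiv:2603.17578 — 4 statements merged into one kernel-verified Lean document; each statement's English description precedes it below -/
import Mathlib

section
/- Let R be a social ranking solution satisfying concatenation consistency (CCON), all indifference all winners (AIAW), and independence of the decomposition of the worst sets (IDWS). Then R satisfies the weak union very important person property (WUVIP). -/
namespace SocRank

/-- A coalitional ranking (a weak order on a set of feasible nonempty coalitions),
represented by its list of equivalence classes, listed from best to worst. -/
structure CoalRanking (X : Type*) where
  classes : List (Finset (Finset X))
  class_nonempty : ∀ C ∈ classes, C.Nonempty
  coal_nonempty : ∀ C ∈ classes, ∀ S ∈ C, S.Nonempty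
  classes_disjoint : classes.Pairwise Disjoint

namespace CoalRanking

variable {X : Type*}

/-- The coalition domain `𝒟(≿)` of a coalitional ranking. -/
def domain [DecidableEq X] (r : CoalRanking X) : Finset (Finset X) :=
  r.classes.foldr (· ∪ ·) ∅

/-- The list of equivalence classes of the restriction of a ranking to a set `D`
of coalitions. -/
def restrictClasses [DecidableEq X] (r : CoalRanking X) (D : Finset (Finset X)) :
    List (Finset (Finset X)) :=
  (r.classes.map (· ∩ D)).filter (fun C => decide C.Nonempty)

/-- Merging two lists of equivalence classes by aligning them at the top. -/
def zipUnion [DecidableEq X] :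
    List (Finset (Finset X)) → List (Finset (Finset X)) → List (Finset (Finset X))
  | [], M => M
  | L, [] => L
  | A :: L, B :: M => (A ∪ B) :: zipUnion L M

/-- `r` is a sum of the disjoint rankings `r₁` and `r₂`: its domain is the union of
the two domains and its restriction to the domain of `rᵢ` is `rᵢ`. -/
def IsSum [DecidableEq X] (r r₁ r₂ : CoalRanking X) : Prop :=
  Disjoint r₁.domain r₂.domain ∧
  r.domain = r₁.domain ∪ r₂.domain ∧
  r.restrictClasses r₁.domain = r₁.classes ∧
  r.restrictClasses r₂.domain = r₂.classes

/-- `r` is the concatenation sum `r₁ · r₂` of the disjoint rankings `r₁` and `r₂`. -/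
def IsConcatSum [DecidableEq X] (r r₁ r₂ : CoalRanking X) : Prop :=
  Disjoint r₁.domain r₂.domain ∧ r.classes = r₁.classes ++ r₂.classes

/-- `r` is the top-aligned sum `r₁ ⊨ r₂` of the disjoint rankings `r₁` and `r₂`. -/
def IsTopAlignedSum [DecidableEq X] (r r₁ r₂ : CoalRanking X) : Prop :=
  Disjoint r₁.domain r₂.domain ∧ r.classes = zipUnion r₁.classes r₂.classes

/-- `r` is the bottom-aligned sum `r₁ ⫤ r₂` of the disjoint rankings `r₁` and `r₂`. -/
def IsBottomAlignedSum [DecidableEq X] (r r₁ r₂ : CoalRanking X) : Prop :=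
  Disjoint r₁.domain r₂.domain ∧
  r.classes = (zipUnion r₁.classes.reverse r₂.classes.reverse).reverse

/-- Renaming the individuals of a coalitional ranking by a permutation `σ` of `X`:
the ranking `≿^σ`. -/
def mapPerm [DecidableEq X] (σ : Equiv.Perm X) (r : CoalRanking X) : CoalRanking X where
  classes := r.classes.map (fun C => C.image (fun S => S.image σ))
  class_nonempty := by
    intro C hC
    simp only [List.mem_map] at hC
    obtain ⟨C₀, hC₀, rfl⟩ := hC
    exact (r.class_nonempty C₀ hC₀).image _
  coal_nonempty := by
    intro C hC S hS
    simp only [List.mem_map] at hC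
    obtain ⟨C₀, hC₀, rfl⟩ := hC
    simp only [Finset.mem_image] at hS
    obtain ⟨S₀, hS₀, rfl⟩ := hS
    exact (r.coal_nonempty C₀ hC₀ S₀ hS₀).image _
  classes_disjoint := by
    refine List.Pairwise.map _ (fun {A B} h => ?_) r.classes_disjoint
    exact (Finset.disjoint_image
      (Finset.image_injective σ.injective)).mpr h

/-- Renaming the coalitions of a coalitional ranking by a permutation `π` of the set of
coalitions (mapping nonempty sets to nonempty sets): the ranking `≿_π`. -/
def mapCoalPerm [DecidableEq X] (π : Equiv.Perm (Finset X))
    (hπ : ∀ S : Finset X, S.Nonempty → (π S).Nonempty) (r : CoalRanking X) :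
    CoalRanking X where
  classes := r.classes.map (fun C => C.image π)
  class_nonempty := by
    intro C hC
    simp only [List.mem_map] at hC
    obtain ⟨C₀, hC₀, rfl⟩ := hC
    exact (r.class_nonempty C₀ hC₀).image _
  coal_nonempty := by
    intro C hC S hS
    simp only [List.mem_map] at hC
    obtain ⟨C₀, hC₀, rfl⟩ := hC
    simp only [Finset.mem_image] at hS
    obtain ⟨S₀, hS₀, rfl⟩ := hS
    exact hπ S₀ (r.coal_nonempty C₀ hC₀ S₀ hS₀)
  classes_disjoint := by
    refine List.Pairwise.map _ (fun {A B} h => ?_) r.classes_disjoint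
    exact (Finset.disjoint_image π.injective).mpr h

end CoalRanking

open CoalRanking

variable {X : Type*}

/-- A social ranking solution: a map assigning to every coalitional ranking a binary
relation on the individuals. -/
abbrev SRSMap (X : Type*) := CoalRanking X → X → X → Prop

/-- The symmetric part `I` of the social ranking. -/
def Ind (R : SRSMap X) (r : CoalRanking X) (x y : X) : Prop := R r x y ∧ R r y x

/-- The asymmetric part `P` of the social ranking. -/
def Pref (R : SRSMap X) (r : CoalRanking X) (x y : X) : Prop := R r x y ∧ ¬ R r y x

/-- Conditions (1)-(4) of consistency for the triple `(r₁, r₂, r)`. -/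
def ConsistentAt (R : SRSMap X) (r₁ r₂ r : CoalRanking X) : Prop :=
  ∀ x y : X,
    (Ind R r₁ x y → Ind R r₂ x y → Ind R r x y) ∧
    (Ind R r₁ x y → Pref R r₂ x y → Pref R r x y) ∧
    (Pref R r₁ x y → Ind R r₂ x y → Pref R r x y) ∧
    (Pref R r₁ x y → Pref R r₂ x y → Pref R r x y)

/-- Consistency (CON). -/
def CON [DecidableEq X] (R : SRSMap X) : Prop :=
  ∀ r₁ r₂ r : CoalRanking X, IsSum r r₁ r₂ → ConsistentAt R r₁ r₂ r

/-- Concatenation consistency (CCON). -/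
def CCON [DecidableEq X] (R : SRSMap X) : Prop :=
  ∀ r₁ r₂ r : CoalRanking X, IsConcatSum r r₁ r₂ → ConsistentAt R r₁ r₂ r

/-- Top-aligned consistency (TCON). -/
def TCON [DecidableEq X] (R : SRSMap X) : Prop :=
  ∀ r₁ r₂ r : CoalRanking X, IsTopAlignedSum r r₁ r₂ → ConsistentAt R r₁ r₂ r

/-- Bottom-aligned consistency (BCON). -/
def BCON [DecidableEq X] (R : SRSMap X) : Prop :=
  ∀ r₁ r₂ r : CoalRanking X, IsBottomAlignedSum r r₁ r₂ → ConsistentAt R r₁ r₂ r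

/-- II-concatenation consistency. -/
def IICCON [DecidableEq X] (R : SRSMap X) : Prop :=
  ∀ r₁ r₂ r : CoalRanking X, IsConcatSum r r₁ r₂ →
    ∀ x y : X, Ind R r₁ x y → Ind R r₂ x y → Ind R r x y

/-- IP-concatenation consistency. -/
def IPCCON [DecidableEq X] (R : SRSMap X) : Prop :=
  ∀ r₁ r₂ r : CoalRanking X, IsConcatSum r r₁ r₂ →
    ∀ x y : X, Ind R r₁ x y → Pref R r₂ x y → Pref R r x y

/-- PI-concatenation consistency. -/
def PICCON [DecidableEq X] (R : SRSMap X) : Prop :=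
  ∀ r₁ r₂ r : CoalRanking X, IsConcatSum r r₁ r₂ →
    ∀ x y : X, Pref R r₁ x y → Ind R r₂ x y → Pref R r x y

/-- PP-concatenation consistency. -/
def PPCCON [DecidableEq X] (R : SRSMap X) : Prop :=
  ∀ r₁ r₂ r : CoalRanking X, IsConcatSum r r₁ r₂ →
    ∀ x y : X, Pref R r₁ x y → Pref R r₂ x y → Pref R r x y

/-- `x_k`: the number of coalitions of the class `C` containing `x`. -/
def cnt [DecidableEq X] (x : X) (C : Finset (Finset X)) : ℕ :=
  (C.filter (fun S => x ∈ S)).card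

/-- The vector `θ_≿(x) = (x₁, …, x_l)`. -/
def theta [DecidableEq X] (r : CoalRanking X) (x : X) : List ℕ :=
  r.classes.map (cnt x)

/-- `sign`: `1` on positive numbers, `0` otherwise. -/
def sgn (n : ℕ) : ℕ := if 0 < n then 1 else 0

/-- The vector `θ̇_≿(x) = (sign(x₁), …, sign(x_l))`. -/
def thetaDot [DecidableEq X] (r : CoalRanking X) (x : X) : List ℕ :=
  (theta r x).map sgn

/-- The lexicographic order `≥^L` on vectors (of equal length). -/
def lexGE : List ℕ → List ℕ → Prop
  | _, [] => True
  | [], _ :: _ => False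
  | a :: as, b :: bs => b < a ∨ (a = b ∧ lexGE as bs)

/-- The lexicographic excellence solution (lex-cel) `R^L`. -/
def lexcel [DecidableEq X] : SRSMap X := fun r x y => lexGE (theta r x) (theta r y)

/-- The sign lexicographic excellence solution (S lex-cel) `R^{SL}`. -/
def slexcel [DecidableEq X] : SRSMap X := fun r x y => lexGE (thetaDot r x) (thetaDot r y)

/-- The plurality solution `R^P`. -/
def plurality [DecidableEq X] : SRSMap X := fun r x y =>
  (theta r y).headD 0 ≤ (theta r x).headD 0

/-- The sign plurality solution `R^{SP}`. -/
def splurality [DecidableEq X] : SRSMap X := fun r x y =>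
  sgn ((theta r y).headD 0) ≤ sgn ((theta r x).headD 0)

/-- The anti-plurality solution `R^{AP}`. -/
def antiplurality [DecidableEq X] : SRSMap X := fun r x y =>
  (theta r x).getLastD 0 ≤ (theta r y).getLastD 0

/-- `e_≿(x)`: the largest `k` such that `x` belongs to every coalition of each of the
first `k` equivalence classes. -/
def eIIS [DecidableEq X] (r : CoalRanking X) (x : X) : ℕ :=
  (r.classes.takeWhile (fun C => decide (∀ S ∈ C, x ∈ S))).length

/-- The intersection initial segment solution (IIS) `R^{IIS}`. -/
def iis [DecidableEq X] : SRSMap X := fun r x y => eIIS r y ≤ eIIS r x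

/-- The index of the equivalence class a coalition belongs to. -/
def classIdx [DecidableEq X] (r : CoalRanking X) (S : Finset X) : ℕ :=
  r.classes.findIdx (fun C => decide (S ∈ C))

/-- `C_{xy}`: the number of CP comparisons in favour of `x` against `y`. -/
def cpCount [DecidableEq X] [Fintype X] (r : CoalRanking X) (x y : X) : ℕ :=
  ((Finset.univ : Finset (Finset X)).filter (fun S =>
    S.Nonempty ∧ x ∉ S ∧ y ∉ S ∧ insert x S ∈ r.domain ∧ insert y S ∈ r.domain ∧
    classIdx r (insert x S) < classIdx r (insert y S))).card

/-- The Ceteris Paribus majority solution `R^{CPM}`. -/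
def cpm [DecidableEq X] [Fintype X] : SRSMap X := fun r x y =>
  cpCount r y x ≤ cpCount r x y

/-- Neutrality (NT). -/
def NT [DecidableEq X] (R : SRSMap X) : Prop :=
  ∀ (σ : Equiv.Perm X) (r : CoalRanking X) (x y : X),
    R (r.mapPerm σ) (σ x) (σ y) ↔ R r x y

/-- Weak coalitional anonymity (WCA). -/
def WCA [DecidableEq X] (R : SRSMap X) : Prop :=
  ∀ (x y : X) (π : Equiv.Perm (Finset X))
    (hπ : ∀ S : Finset X, S.Nonempty → (π S).Nonempty),
    (∀ S : Finset X, x ∈ S → x ∈ π S) → (∀ S : Finset X, y ∈ S → y ∈ π S) →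
    ∀ r : CoalRanking X,
      (R (r.mapCoalPerm π hπ) x y ↔ R r x y) ∧ (R (r.mapCoalPerm π hπ) y x ↔ R r y x)

/-- The weak union very important person property (WUVIP). -/
def WUVIP (R : SRSMap X) : Prop :=
  ∀ (r : CoalRanking X) (A B : Finset (Finset X)), r.classes = [A, B] →
    ∀ x y : X, (∃ S ∈ A, x ∈ S) → (∀ S ∈ A, y ∉ S) → Pref R r x y

/-- All indifference all winners (AIAW). -/
def AIAW [DecidableEq X] (R : SRSMap X) : Prop :=
  ∀ r : CoalRanking X, r.classes.length ≤ 1 →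
    (∀ x y : X, (∃ S ∈ r.domain, x ∈ S) → (∃ S ∈ r.domain, y ∈ S) → Ind R r x y) ∧
    (∀ x z : X, (∃ S ∈ r.domain, x ∈ S) → (∀ S ∈ r.domain, z ∉ S) → Pref R r x z)

/-- Independence of the decomposition of the worst sets (IDWS). -/
def IDWS [DecidableEq X] (R : SRSMap X) : Prop :=
  ∀ (r r' : CoalRanking X) (L G : List (Finset (Finset X))) (W : Finset (Finset X)),
    L ≠ [] → r.classes = L ++ [W] → r'.classes = L ++ G →
    G.foldr (· ∪ ·) ∅ = W →
    ∀ x y : X, Pref R r x y → Pref R r' x y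

/-- Independence of the addition of the worst sets (IAWS). -/
def IAWS [DecidableEq X] (R : SRSMap X) : Prop :=
  ∀ (r r' : CoalRanking X) (G : Finset (Finset X)),
    r'.classes = r.classes ++ [G] → (∀ S ∈ G, S ∉ r.domain) →
    ∀ x y : X, Pref R r x y → Pref R r' x y

/-- Tops-only (TO). -/
def TO (R : SRSMap X) : Prop :=
  ∀ (r r' : CoalRanking X) (A : Finset (Finset X)),
    r.classes.head? = some A → r'.classes.head? = some A → R r = R r'

/-- The dual S lex-cel `R^{DSL}`. -/
def dslexcel [DecidableEq X] : SRSMap X := fun r x y =>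
  lexGE ((thetaDot r y).reverse) ((thetaDot r x).reverse)

/-- The inverse dual S lex-cel `R^{IDSL}`. -/
def idslexcel [DecidableEq X] : SRSMap X := fun r x y => dslexcel r y x

/-- The vector `θ̃_≿(x)` used by the S lex-cel with precedence on unanimity. -/
def tildeTheta [DecidableEq X] (r : CoalRanking X) (x : X) : List ℕ :=
  r.classes.map (fun C => if cnt x C = C.card then 2 else if 0 < cnt x C then 1 else 0)

/-- The S lex-cel with a particular precedence on unanimity `R^{SLUN}`. -/
def slun [DecidableEq X] : SRSMap X := fun r x y =>
  lexGE (tildeTheta r x) (tildeTheta r y)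

/-- The S sum score `Σ_k sign(x_k)`. -/
def ssum [DecidableEq X] (r : CoalRanking X) (x : X) : ℕ := (thetaDot r x).sum

/-- The S sum rule with tie-breaking by S lex-cel `R^{SSUM,SL}`. -/
def ssumSL [DecidableEq X] : SRSMap X := fun r x y =>
  ssum r y < ssum r x ∨ (ssum r x = ssum r y ∧ slexcel r x y)

end SocRank

open SocRank

section WUVIPHelpers

variable {X : Type*} [DecidableEq X]

/-- Single-class coalitional ranking. -/
def oneCls (C : Finset (Finset X)) (hC : C.Nonempty)
    (h : ∀ S ∈ C, S.Nonempty) : CoalRanking X :=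
  ⟨[C], by simpa using hC, by simpa using h, by simp⟩

@[simp] lemma oneCls_classes (C : Finset (Finset X)) (hC : C.Nonempty)
    (h : ∀ S ∈ C, S.Nonempty) : (oneCls C hC h).classes = [C] := rfl

@[simp] lemma oneCls_domain (C : Finset (Finset X)) (hC : C.Nonempty)
    (h : ∀ S ∈ C, S.Nonempty) : (oneCls C hC h).domain = C := by
  simp [CoalRanking.domain, oneCls]

/-- Two-class coalitional ranking. -/
def twoCls (C D : Finset (Finset X)) (hC : C.Nonempty) (hD : D.Nonempty)
    (h : ∀ S ∈ C, S.Nonempty) (h' : ∀ S ∈ D, S.Nonempty)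
    (hdisj : Disjoint C D) : CoalRanking X :=
  ⟨[C, D], by
      intro E hE
      rcases List.mem_cons.mp hE with rfl | hE
      · exact hC
      · rcases List.mem_singleton.mp hE with rfl; exact hD,
    by
      intro E hE
      rcases List.mem_cons.mp hE with rfl | hE
      · exact h
      · rcases List.mem_singleton.mp hE with rfl; exact h',
    by simp [hdisj]⟩

@[simp] lemma twoCls_classes (C D : Finset (Finset X)) (hC : C.Nonempty) (hD : D.Nonempty)
    (h : ∀ S ∈ C, S.Nonempty) (h' : ∀ S ∈ D, S.Nonempty) (hdisj : Disjoint C D) :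
    (twoCls C D hC hD h h' hdisj).classes = [C, D] := rfl

/-- Three-class coalitional ranking. -/
def threeCls (C D E : Finset (Finset X)) (hC : C.Nonempty) (hD : D.Nonempty)
    (hE : E.Nonempty)
    (h : ∀ S ∈ C, S.Nonempty) (h' : ∀ S ∈ D, S.Nonempty) (h'' : ∀ S ∈ E, S.Nonempty)
    (hCD : Disjoint C D) (hCE : Disjoint C E) (hDE : Disjoint D E) : CoalRanking X :=
  ⟨[C, D, E], by
      intro F hF
      rcases List.mem_cons.mp hF with rfl | hF
      · exact hC
      rcases List.mem_cons.mp hF with rfl | hF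
      · exact hD
      rcases List.mem_singleton.mp hF with rfl; exact hE,
    by
      intro F hF
      rcases List.mem_cons.mp hF with rfl | hF
      · exact h
      rcases List.mem_cons.mp hF with rfl | hF
      · exact h'
      rcases List.mem_singleton.mp hF with rfl; exact h'',
    by simp [hCD, hCE, hDE]⟩

@[simp] lemma threeCls_classes (C D E : Finset (Finset X)) (hC : C.Nonempty)
    (hD : D.Nonempty) (hE : E.Nonempty)
    (h : ∀ S ∈ C, S.Nonempty) (h' : ∀ S ∈ D, S.Nonempty) (h'' : ∀ S ∈ E, S.Nonempty)
    (hCD : Disjoint C D) (hCE : Disjoint C E) (hDE : Disjoint D E) :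
    (threeCls C D E hC hD hE h h' h'' hCD hCE hDE).classes = [C, D, E] := rfl

end WUVIPHelpers

/-- an SRS satisfying CCON, AIAW and IDWS also satisfies WUVIP. -/
theorem ccon_aiaw_idws_implies_wuvip {X : Type*} [DecidableEq X] [Fintype X]
    (hX : 3 ≤ Fintype.card X) (R : SRSMap X)
    (hrefl : ∀ (r : CoalRanking X) (x : X), R r x x)
    (hcomp : ∀ (r : CoalRanking X) (x y : X), R r x y ∨ R r y x)
    (hCCON : CCON R) (hAIAW : AIAW R) (hIDWS : IDWS R) :
    WUVIP R := by
  intro r A B hr x y hx hy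
  obtain ⟨S₀, hS₀A, hxS₀⟩ := hx
  have hAmem : A ∈ r.classes := by rw [hr]; simp
  have hBmem : B ∈ r.classes := by rw [hr]; simp
  have hAne := r.class_nonempty A hAmem
  have hBne := r.class_nonempty B hBmem
  have hAco := r.coal_nonempty A hAmem
  have hBco := r.coal_nonempty B hBmem
  have hAB : Disjoint A B := by
    have h := r.classes_disjoint
    rw [hr] at h
    exact (List.pairwise_cons.mp h).1 B (by simp)
  -- x is strictly preferred to y in the one-class ranking [A]
  have hPrefA : Pref R (oneCls A hAne hAco) x y := by
    refine (hAIAW (oneCls A hAne hAco) (by simp)).2 x y ⟨S₀, ?_, hxS₀⟩ ?_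
    · simp [hS₀A]
    · intro S hS
      exact hy S (by simpa using hS)
  by_cases hTB : ({x, y} : Finset X) ∈ B
  · -- easy case: both x and y belong to some coalition of B
    have hIndB : Ind R (oneCls B hBne hBco) x y := by
      refine (hAIAW (oneCls B hBne hBco) (by simp)).1 x y
        ⟨{x, y}, by simp [hTB], by simp⟩ ⟨{x, y}, by simp [hTB], by simp⟩
    have hsum : CoalRanking.IsConcatSum r (oneCls A hAne hAco) (oneCls B hBne hBco) := by
      refine ⟨by simpa using hAB, ?_⟩
      rw [hr]; rfl
    exact (hCCON _ _ r hsum x y).2.2.1 hPrefA hIndB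
  · -- main case: T = {x,y} is a fresh coalition
    have hTA : ({x, y} : Finset X) ∉ A := fun h => hy _ h (by simp)
    have hTne : ({x, y} : Finset X).Nonempty := ⟨x, by simp⟩
    have hTco : ∀ S ∈ ({({x, y} : Finset X)} : Finset (Finset X)), S.Nonempty := by
      intro S hS
      rcases Finset.mem_singleton.mp hS with rfl
      exact hTne
    have hTsne : ({({x, y} : Finset X)} : Finset (Finset X)).Nonempty :=
      Finset.singleton_nonempty _
    have hBTne : (B ∪ {({x, y} : Finset X)}).Nonempty := hBne.mono Finset.subset_union_left
    have hBTco : ∀ S ∈ B ∪ {({x, y} : Finset X)}, S.Nonempty := by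
      intro S hS
      rcases Finset.mem_union.mp hS with hS | hS
      · exact hBco S hS
      · rcases Finset.mem_singleton.mp hS with rfl; exact hTne
    have hAT : Disjoint A ({({x, y} : Finset X)} : Finset (Finset X)) :=
      Finset.disjoint_singleton_right.mpr hTA
    have hBT : Disjoint B ({({x, y} : Finset X)} : Finset (Finset X)) :=
      Finset.disjoint_singleton_right.mpr hTB
    have hABT : Disjoint A (B ∪ {({x, y} : Finset X)}) :=
      Finset.disjoint_union_right.mpr ⟨hAB, hAT⟩
    -- the coarse ranking [A, B ∪ {T}] and the refined ranking [A, B, {T}]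
    have hIndBT : Ind R (oneCls (B ∪ {({x, y} : Finset X)}) hBTne hBTco) x y := by
      refine (hAIAW (oneCls (B ∪ {({x, y} : Finset X)}) hBTne hBTco) (by simp)).1 x y
        ⟨{x, y}, by simp, by simp⟩ ⟨{x, y}, by simp, by simp⟩
    have hPrefc : Pref R (twoCls A (B ∪ {({x, y} : Finset X)}) hAne hBTne hAco hBTco hABT)
        x y := by
      have hsum : CoalRanking.IsConcatSum
          (twoCls A (B ∪ {({x, y} : Finset X)}) hAne hBTne hAco hBTco hABT)
          (oneCls A hAne hAco)
          (oneCls (B ∪ {({x, y} : Finset X)}) hBTne hBTco) := by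
        refine ⟨by simpa using hABT, rfl⟩
      exact (hCCON _ _ _ hsum x y).2.2.1 hPrefA hIndBT
    have hPrefp : Pref R
        (threeCls A B {({x, y} : Finset X)} hAne hBne hTsne hAco hBco hTco hAB hAT hBT)
        x y := by
      refine hIDWS
        (twoCls A (B ∪ {({x, y} : Finset X)}) hAne hBTne hAco hBTco hABT)
        (threeCls A B {({x, y} : Finset X)} hAne hBne hTsne hAco hBco hTco hAB hAT hBT)
        [A] [B, {({x, y} : Finset X)}] (B ∪ {({x, y} : Finset X)})
        (by simp) rfl rfl (by simp) x y hPrefc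
    -- the refined ranking is the concatenation r · [{T}]
    have hsum2 : CoalRanking.IsConcatSum
        (threeCls A B {({x, y} : Finset X)} hAne hBne hTsne hAco hBco hTco hAB hAT hBT)
        r (oneCls {({x, y} : Finset X)} hTsne hTco) := by
      constructor
      · have hrd : r.domain = A ∪ B := by
          simp [CoalRanking.domain, hr]
        rw [hrd, oneCls_domain]
        refine Finset.disjoint_union_left.mpr ⟨hAT, hBT⟩
      · rw [hr]; rfl
    have hIndT : Ind R (oneCls {({x, y} : Finset X)} hTsne hTco) x y := by
      refine (hAIAW (oneCls {({x, y} : Finset X)} hTsne hTco) (by simp)).1 x y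
        ⟨{x, y}, by simp, by simp⟩ ⟨{x, y}, by simp, by simp⟩
    by_cases h1 : R r y x
    · by_cases h2 : R r x y
      · -- x and y indifferent in r: contradiction with hPrefp
        have hInd : Ind R r x y := ⟨h2, h1⟩
        have := (hCCON r (oneCls {({x, y} : Finset X)} hTsne hTco) _ hsum2 x y).1
          hInd hIndT
        exact absurd this.2 hPrefp.2
      · -- y strictly preferred to x in r: contradiction with hPrefp
        have hP : Pref R r y x := ⟨h1, h2⟩
        have := (hCCON r (oneCls {({x, y} : Finset X)} hTsne hTco) _ hsum2 y x).2.2.1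
          hP ⟨hIndT.2, hIndT.1⟩
        exact absurd this.1 hPrefp.2
    · exact ⟨(hcomp r x y).resolve_right h1, h1⟩
end

section
/- Let R be a social ranking solution satisfying neutrality (NT), concatenation consistency (CCON), and all indifference all winners (AIAW). Then R satisfies independence of the addition of the worst sets (IAWS) if and only if R equals the S lex-cel solution R^SL. -/
namespace SocRank

variable {X : Type*}

open CoalRanking in
lemma coalranking_ext_dummy : True := trivial

/-- Extensionality for coalitional rankings. -/
lemma CoalRanking.ext' {r r' : CoalRanking X} (h : r.classes = r'.classes) : r = r' := by
  cases r; cases r'; simp_all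

/-- The restriction of a ranking to a sublist of its classes. -/
def CoalRanking.sub (r : CoalRanking X) (L : List (Finset (Finset X)))
    (h : L.Sublist r.classes) : CoalRanking X where
  classes := L
  class_nonempty := fun C hC => r.class_nonempty C (h.subset hC)
  coal_nonempty := fun C hC => r.coal_nonempty C (h.subset hC)
  classes_disjoint := r.classes_disjoint.sublist h

lemma mem_foldr_union [DecidableEq X] (L : List (Finset (Finset X))) (S : Finset X) :
    S ∈ L.foldr (· ∪ ·) ∅ ↔ ∃ C ∈ L, S ∈ C := by
  induction L with
  | nil => simp
  | cons C L ih => simp [ih]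

lemma mem_domain [DecidableEq X] (r : CoalRanking X) (S : Finset X) :
    S ∈ r.domain ↔ ∃ C ∈ r.classes, S ∈ C := mem_foldr_union _ _

lemma disjoint_foldr [DecidableEq X] (A B : List (Finset (Finset X)))
    (h : (A ++ B).Pairwise Disjoint) :
    Disjoint (A.foldr (· ∪ ·) ∅) (B.foldr (· ∪ ·) ∅) := by
  rw [List.pairwise_append] at h
  rw [Finset.disjoint_left]
  intro S hA hB
  rw [mem_foldr_union] at hA hB
  obtain ⟨C₁, hC₁, hS₁⟩ := hA
  obtain ⟨C₂, hC₂, hS₂⟩ := hB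
  exact (Finset.disjoint_left.mp (h.2.2 C₁ hC₁ C₂ hC₂)) hS₁ hS₂

lemma cnt_pos_iff [DecidableEq X] (x : X) (C : Finset (Finset X)) :
    0 < cnt x C ↔ ∃ S ∈ C, x ∈ S := by
  simp [cnt, Finset.card_pos, Finset.filter_nonempty_iff]

lemma sgn_pos_iff {m n : ℕ} (h : sgn m = sgn n) : 0 < m ↔ 0 < n := by
  unfold sgn at h
  by_cases hm : 0 < m <;> by_cases hn : 0 < n <;> simp [hm, hn] at h ⊢

lemma sgn_lt {m n : ℕ} (h : sgn m < sgn n) : m = 0 ∧ 0 < n := by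
  unfold sgn at h
  by_cases hm : 0 < m <;> by_cases hn : 0 < n <;> simp [hm, hn] at h <;> omega

lemma lexGE_nil : ∀ a : List ℕ, lexGE a []
  | [] => trivial
  | _ :: _ => trivial

lemma lexGE_refl : ∀ a : List ℕ, lexGE a a
  | [] => trivial
  | _ :: as => Or.inr ⟨rfl, lexGE_refl as⟩

lemma lexGE_total : ∀ a b : List ℕ, lexGE a b ∨ lexGE b a
  | a, [] => Or.inl (lexGE_nil a)
  | [], b :: bs => Or.inr (lexGE_nil _)
  | a :: as, b :: bs => by
    rcases Nat.lt_trichotomy a b with h | h | h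
    · exact Or.inr (Or.inl h)
    · rcases lexGE_total as bs with h' | h'
      · exact Or.inl (Or.inr ⟨h, h'⟩)
      · exact Or.inr (Or.inr ⟨h.symm, h'⟩)
    · exact Or.inl (Or.inl h)

lemma lexGE_antisymm : ∀ a b : List ℕ, a.length = b.length →
    lexGE a b → lexGE b a → a = b
  | [], [], _, _, _ => rfl
  | [], _ :: _, h, _, _ => by simp at h
  | _ :: _, [], h, _, _ => by simp at h
  | a :: as, b :: bs, h, hab, hba => by
    rcases hab with h1 | ⟨h1, h1'⟩
    · rcases hba with h2 | ⟨h2, _⟩ <;> omega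
    · rcases hba with h2 | ⟨h2, h2'⟩
      · omega
      · simp only [List.length_cons, Nat.add_right_cancel_iff] at h
        rw [h1, lexGE_antisymm as bs h h1' h2']

lemma lexGE_append_strict : ∀ (a b : List ℕ) (c d : ℕ), a.length = b.length →
    lexGE a b → ¬ lexGE b a →
    lexGE (a ++ [c]) (b ++ [d]) ∧ ¬ lexGE (b ++ [d]) (a ++ [c])
  | [], [], _, _, _, _, hn => absurd trivial hn
  | [], _ :: _, _, _, h, _, _ => by simp at h
  | _ :: _, [], _, _, h, _, _ => by simp at h
  | a :: as, b :: bs, c, d, h, hab, hba => by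
    simp only [List.length_cons, Nat.add_right_cancel_iff] at h
    rcases hab with h1 | ⟨h1, h1'⟩
    · refine ⟨Or.inl h1, ?_⟩
      rintro (h2 | ⟨h2, _⟩) <;> omega
    · have hnba : ¬ lexGE bs as := fun hc => hba (Or.inr ⟨h1.symm, hc⟩)
      obtain ⟨ih1, ih2⟩ := lexGE_append_strict as bs c d h h1' hnba
      refine ⟨Or.inr ⟨h1, ih1⟩, ?_⟩
      rintro (h2 | ⟨_, h2⟩)
      · omega
      · exact ih2 h2

lemma thetaDot_length [DecidableEq X] (r : CoalRanking X) (x : X) :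
    (thetaDot r x).length = r.classes.length := by simp [thetaDot, theta]

lemma thetaDot_sub [DecidableEq X] (r : CoalRanking X) (L : List (Finset (Finset X)))
    (h : L.Sublist r.classes) (x : X) :
    thetaDot (r.sub L h) x = L.map (fun C => sgn (cnt x C)) := by
  simp [thetaDot, theta, CoalRanking.sub, List.map_map, Function.comp]

section Main

variable [DecidableEq X] (R : SRSMap X)

/-- Swap trick: if neither `x` nor `y` appears anywhere, they are indifferent. -/
lemma swap_ind (hrefl : ∀ (r : CoalRanking X) (x : X), R r x x)
    (hcomp : ∀ (r : CoalRanking X) (x y : X), R r x y ∨ R r y x)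
    (hNT : NT R) (r : CoalRanking X) (x y : X)
    (hx : ∀ C ∈ r.classes, ∀ S ∈ C, x ∉ S)
    (hy : ∀ C ∈ r.classes, ∀ S ∈ C, y ∉ S) : Ind R r x y := by
  rcases eq_or_ne x y with rfl | hxy
  · exact ⟨hrefl r x, hrefl r x⟩
  have hmap : r.mapPerm (Equiv.swap x y) = r := by
    apply CoalRanking.ext'
    show r.classes.map _ = r.classes
    conv_rhs => rw [← List.map_id r.classes]
    apply List.map_congr_left
    intro C hC
    simp only [id]
    conv_rhs => rw [← Finset.image_id (s := C)]
    apply Finset.image_congr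
    intro S hS
    simp only [id]
    conv_rhs => rw [← Finset.image_id (s := S)]
    apply Finset.image_congr
    intro a ha
    simp only [id]
    exact Equiv.swap_apply_of_ne_of_ne
      (fun h => hx C hC S hS (h ▸ ha)) (fun h => hy C hC S hS (h ▸ ha))
  have h1 := hNT (Equiv.swap x y) r x y
  rw [hmap, Equiv.swap_apply_left, Equiv.swap_apply_right] at h1
  rcases hcomp r x y with h | h
  · exact ⟨h, h1.mpr h⟩
  · exact ⟨h1.mp h, h⟩

/-- Indifference on a short ranking, given matching appearance. -/
lemma ind_single (hrefl : ∀ (r : CoalRanking X) (x : X), R r x x)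
    (hcomp : ∀ (r : CoalRanking X) (x y : X), R r x y ∨ R r y x)
    (hNT : NT R) (hAIAW : AIAW R) (r : CoalRanking X) (x y : X)
    (h1 : r.classes.length ≤ 1)
    (hs : (∃ S ∈ r.domain, x ∈ S) ↔ (∃ S ∈ r.domain, y ∈ S)) :
    Ind R r x y := by
  by_cases hx : ∃ S ∈ r.domain, x ∈ S
  · exact (hAIAW r h1).1 x y hx (hs.mp hx)
  · have hy : ¬ ∃ S ∈ r.domain, y ∈ S := fun h => hx (hs.mpr h)
    apply swap_ind R hrefl hcomp hNT
    · intro C hC S hS hxS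
      exact hx ⟨S, (mem_domain r S).mpr ⟨C, hC, hS⟩, hxS⟩
    · intro C hC S hS hyS
      exact hy ⟨S, (mem_domain r S).mpr ⟨C, hC, hS⟩, hyS⟩

lemma single_sublist (r : CoalRanking X) (C : Finset (Finset X)) (L : List (Finset (Finset X)))
    (hcl : r.classes = C :: L) : [C].Sublist r.classes := by
  rw [hcl]; exact (List.nil_sublist L).cons₂ C

lemma tail_sublist' (r : CoalRanking X) (C : Finset (Finset X)) (L : List (Finset (Finset X)))
    (hcl : r.classes = C :: L) : L.Sublist r.classes := by
  rw [hcl]; exact List.sublist_cons_self C L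

/-- Equal sign vectors imply indifference. -/
lemma ind_of_thetaDot_eq (hrefl : ∀ (r : CoalRanking X) (x : X), R r x x)
    (hcomp : ∀ (r : CoalRanking X) (x y : X), R r x y ∨ R r y x)
    (hNT : NT R) (hCCON : CCON R) (hAIAW : AIAW R) :
    ∀ (n : ℕ) (r : CoalRanking X) (x y : X), r.classes.length = n →
      thetaDot r x = thetaDot r y → Ind R r x y := by
  intro n
  induction n with
  | zero =>
    intro r x y hlen _
    rw [List.length_eq_zero_iff] at hlen
    exact swap_ind R hrefl hcomp hNT r x y
      (by rw [hlen]; simp) (by rw [hlen]; simp)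
  | succ n ih =>
    intro r x y hlen heq
    obtain ⟨C, L, hcl⟩ : ∃ C L, r.classes = C :: L :=
      List.exists_cons_of_ne_nil (by rw [← List.length_pos_iff] at *; omega)
    set r₁ := r.sub [C] (single_sublist r C L hcl) with hr₁
    set r₂ := r.sub L (tail_sublist' r C L hcl) with hr₂
    have hsum : CoalRanking.IsConcatSum r r₁ r₂ := by
      refine ⟨?_, hcl⟩
      have := r.classes_disjoint
      rw [hcl] at this
      exact disjoint_foldr [C] L (by simpa using this)
    have hth : thetaDot r x = sgn (cnt x C) :: L.map (fun D => sgn (cnt x D)) := by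
      simp [thetaDot, theta, hcl, List.map_map, Function.comp]
    have hth' : thetaDot r y = sgn (cnt y C) :: L.map (fun D => sgn (cnt y D)) := by
      simp [thetaDot, theta, hcl, List.map_map, Function.comp]
    rw [hth, hth'] at heq
    have hhead : sgn (cnt x C) = sgn (cnt y C) := (List.cons.injEq _ _ _ _ ▸ heq).1
    have htail := (List.cons.injEq _ _ _ _ ▸ heq).2
    have hind1 : Ind R r₁ x y := by
      apply ind_single R hrefl hcomp hNT hAIAW r₁ x y (by simp [hr₁, CoalRanking.sub])
      have hd : ∀ z : X, (∃ S ∈ r₁.domain, z ∈ S) ↔ 0 < cnt z C := by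
        intro z
        rw [cnt_pos_iff]
        constructor
        · rintro ⟨S, hS, hz⟩
          rw [mem_domain] at hS
          obtain ⟨D, hD, hSD⟩ := hS
          simp only [hr₁, CoalRanking.sub, List.mem_singleton] at hD
          exact ⟨S, hD ▸ hSD, hz⟩
        · rintro ⟨S, hS, hz⟩
          exact ⟨S, (mem_domain _ _).mpr ⟨C, by simp [hr₁, CoalRanking.sub], hS⟩, hz⟩
      rw [hd x, hd y]
      exact sgn_pos_iff hhead
    have hind2 : Ind R r₂ x y := by
      apply ih r₂ x y (by simp [hr₂, CoalRanking.sub]; rw [hcl] at hlen; simpa using hlen)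
      rw [thetaDot_sub, thetaDot_sub]
      exact htail
    exact (hCCON r₁ r₂ r hsum x y).1 hind1 hind2

/-- IAWS iteration: extend a strict preference on a prefix to the full ranking. -/
lemma extend_pref (hIAWS : IAWS R) :
    ∀ (L : List (Finset (Finset X))) (r rM : CoalRanking X),
      r.classes = rM.classes ++ L → ∀ x y : X, Pref R rM x y → Pref R r x y := by
  intro L
  induction L using List.reverseRecOn with
  | nil =>
    intro r rM h x y hp
    rw [List.append_nil] at h
    rwa [CoalRanking.ext' h]
  | append_singleton L' G ihL =>
    intro r rM h x y hp
    have hpre : (rM.classes ++ L').Sublist r.classes := by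
      rw [h, ← List.append_assoc]
      exact (List.prefix_append _ _).sublist
    set r' := r.sub (rM.classes ++ L') hpre with hr'
    have hp' : Pref R r' x y := ihL r' rM rfl x y hp
    apply hIAWS r' r G
    · show r.classes = (rM.classes ++ L') ++ [G]
      rw [h, List.append_assoc]
    · intro S hSG hSd
      rw [mem_domain] at hSd
      obtain ⟨C, hC, hSC⟩ := hSd
      have hpw := r.classes_disjoint
      rw [h, ← List.append_assoc, List.pairwise_append] at hpw
      exact Finset.disjoint_left.mp (hpw.2.2 C hC G (List.mem_singleton_self G)) hSC hSG
    · exact hp'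

/-- Strict sign-lexicographic dominance implies strict preference. -/
lemma pref_of_slex (hrefl : ∀ (r : CoalRanking X) (x : X), R r x x)
    (hcomp : ∀ (r : CoalRanking X) (x y : X), R r x y ∨ R r y x)
    (hNT : NT R) (hCCON : CCON R) (hAIAW : AIAW R) (hIAWS : IAWS R) :
    ∀ (n : ℕ) (r : CoalRanking X) (x y : X), r.classes.length = n →
      lexGE (thetaDot r x) (thetaDot r y) → ¬ lexGE (thetaDot r y) (thetaDot r x) →
      Pref R r x y := by
  intro n
  induction n with
  | zero =>
    intro r x y hlen h1 h2
    rw [List.length_eq_zero_iff] at hlen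
    exfalso
    have hx' : thetaDot r x = [] := by simp [thetaDot, theta, hlen]
    exact h2 (by rw [hx']; exact lexGE_nil _)
  | succ n ih =>
    intro r x y hlen h1 h2
    obtain ⟨C, L, hcl⟩ : ∃ C L, r.classes = C :: L :=
      List.exists_cons_of_ne_nil (by rw [← List.length_pos_iff] at *; omega)
    set r₁ := r.sub [C] (single_sublist r C L hcl) with hr₁
    set r₂ := r.sub L (tail_sublist' r C L hcl) with hr₂
    have hsum : CoalRanking.IsConcatSum r r₁ r₂ := by
      refine ⟨?_, hcl⟩
      have := r.classes_disjoint
      rw [hcl] at this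
      exact disjoint_foldr [C] L (by simpa using this)
    have hth : thetaDot r x = sgn (cnt x C) :: L.map (fun D => sgn (cnt x D)) := by
      simp [thetaDot, theta, hcl, List.map_map, Function.comp]
    have hth' : thetaDot r y = sgn (cnt y C) :: L.map (fun D => sgn (cnt y D)) := by
      simp [thetaDot, theta, hcl, List.map_map, Function.comp]
    rw [hth, hth'] at h1 h2
    rcases h1 with hlt | ⟨hEq, htail⟩
    · -- head strictly favours x : cnt y C = 0 < cnt x C
      have hx : 0 < cnt x C := (sgn_lt hlt).2
      have hy : cnt y C = 0 := (sgn_lt hlt).1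
      have hp1 : Pref R r₁ x y := by
        have hd : ∀ (S : Finset X), S ∈ r₁.domain ↔ S ∈ C := by
          intro S
          rw [mem_domain]
          constructor
          · rintro ⟨D, hD, hSD⟩
            simp only [hr₁, CoalRanking.sub, List.mem_singleton] at hD
            exact hD ▸ hSD
          · intro hS; exact ⟨C, by simp [hr₁, CoalRanking.sub], hS⟩
        apply (hAIAW r₁ (by simp [hr₁, CoalRanking.sub])).2 x y
        · obtain ⟨S, hS, hxS⟩ := (cnt_pos_iff x C).mp hx
          exact ⟨S, (hd S).mpr hS, hxS⟩
        · intro S hS hyS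
          have : 0 < cnt y C := (cnt_pos_iff y C).mpr ⟨S, (hd S).mp hS, hyS⟩
          omega
      -- extend from prefix [C] to the whole ranking by IAWS
      exact extend_pref R hIAWS L r r₁ (by rw [hcl]; rfl) x y hp1
    · -- heads tie: recurse on tail and use CCON(2)
      have h2' : ¬ lexGE (L.map fun D => sgn (cnt y D)) (L.map fun D => sgn (cnt x D)) :=
        fun hc => h2 (Or.inr ⟨hEq.symm, hc⟩)
      have hind1 : Ind R r₁ x y := by
        apply ind_single R hrefl hcomp hNT hAIAW r₁ x y (by simp [hr₁, CoalRanking.sub])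
        have hd : ∀ z : X, (∃ S ∈ r₁.domain, z ∈ S) ↔ 0 < cnt z C := by
          intro z
          rw [cnt_pos_iff]
          constructor
          · rintro ⟨S, hS, hz⟩
            rw [mem_domain] at hS
            obtain ⟨D, hD, hSD⟩ := hS
            simp only [hr₁, CoalRanking.sub, List.mem_singleton] at hD
            exact ⟨S, hD ▸ hSD, hz⟩
          · rintro ⟨S, hS, hz⟩
            exact ⟨S, (mem_domain _ _).mpr ⟨C, by simp [hr₁, CoalRanking.sub], hS⟩, hz⟩
        rw [hd x, hd y]
        exact sgn_pos_iff hEq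
      have hp2 : Pref R r₂ x y := by
        apply ih r₂ x y (by simp [hr₂, CoalRanking.sub]; rw [hcl] at hlen; simpa using hlen)
        · rw [thetaDot_sub, thetaDot_sub]; exact htail
        · rw [thetaDot_sub, thetaDot_sub]; exact h2'
      exact (hCCON r₁ r₂ r hsum x y).2.1 hind1 hp2

end Main

end SocRank

open SocRank

/-- for an SRS satisfying NT, CCON and AIAW, IAWS holds iff the SRS
is the S lex-cel. -/
theorem slexcel_characterization_iaws {X : Type*} [DecidableEq X] [Fintype X]
    (hX : 3 ≤ Fintype.card X) (R : SRSMap X)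
    (hrefl : ∀ (r : CoalRanking X) (x : X), R r x x)
    (hcomp : ∀ (r : CoalRanking X) (x y : X), R r x y ∨ R r y x)
    (hNT : NT R) (hCCON : CCON R) (hAIAW : AIAW R) :
    IAWS R ↔ R = slexcel := by
  constructor
  · intro hIAWS
    funext r x y
    have hlen : (thetaDot r x).length = (thetaDot r y).length := by
      rw [thetaDot_length, thetaDot_length]
    by_cases heq : thetaDot r x = thetaDot r y
    · apply propext
      refine iff_of_true ?_ ?_
      · exact (ind_of_thetaDot_eq R hrefl hcomp hNT hCCON hAIAW r.classes.length r x y rfl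
          heq).1
      · show lexGE (thetaDot r x) (thetaDot r y)
        rw [heq]; exact lexGE_refl _
    · rcases lexGE_total (thetaDot r x) (thetaDot r y) with h | h
      · have h2 : ¬ lexGE (thetaDot r y) (thetaDot r x) :=
          fun hc => heq (lexGE_antisymm _ _ hlen h hc)
        exact propext (iff_of_true
          (pref_of_slex R hrefl hcomp hNT hCCON hAIAW hIAWS r.classes.length r x y rfl
            h h2).1 h)
      · have h2 : ¬ lexGE (thetaDot r x) (thetaDot r y) :=
          fun hc => heq (lexGE_antisymm _ _ hlen hc h)
        have hp := pref_of_slex R hrefl hcomp hNT hCCON hAIAW hIAWS r.classes.length r y x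
          rfl h h2
        exact propext (iff_of_false hp.2 h2)
  · rintro rfl
    intro r r' G hcl hG x y hp
    obtain ⟨h1, h2⟩ := hp
    have hlen : (thetaDot r x).length = (thetaDot r y).length := by
      rw [thetaDot_length, thetaDot_length]
    have hax : thetaDot r' x = thetaDot r x ++ [sgn (cnt x G)] := by
      simp [thetaDot, theta, hcl]
    have hay : thetaDot r' y = thetaDot r y ++ [sgn (cnt y G)] := by
      simp [thetaDot, theta, hcl]
    have key := lexGE_append_strict (thetaDot r x) (thetaDot r y)
      (sgn (cnt x G)) (sgn (cnt y G)) hlen h1 h2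
    exact ⟨by show lexGE _ _; rw [hax, hay]; exact key.1,
      by show ¬ lexGE _ _; rw [hax, hay]; exact key.2⟩
end

section
/- A social ranking solution R satisfies neutrality (NT), weak coalitional anonymity (WCA), the weak union very important person property (WUVIP), concatenation consistency (CCON), top-aligned consistency (TCON), and independence of the addition of the worst sets (IAWS) if and only if R equals the lex-cel solution R^L. -/
/-!
Lex-cel compares the vectors `θ(x)` lexicographically. Concatenation appends these vectors,
a top-aligned sum adds them coordinatewise and adding a worst class appends one coordinate, so
lex-cel has all six properties.

Conversely, NT and WCA make `x` and `y` indifferent in a one-class ranking in which they occur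
equally often: swap `x` and `y`, then undo the swap by a permutation of coalitions that preserves
membership of `x` and of `y`. CCON extends this class by class to every ranking with
`θ(x) = θ(y)`. In one class where `x` occurs more often than `y`, split off coalitions containing
`x` but not `y` that account for the surplus; WUVIP with CCON makes `x` strictly better on them,
and TCON combines this with the tie on the rest. Finally, if `θ(x)` first exceeds `θ(y)` at class
`k`, CCON combines the tie above `k` with the strict preference at `k`, and IAWS adds the classes
below `k` one at a time.
-/

namespace Finset

theorem exists_perm_image_eq_of_card_filter_eq {α β : Type*} [DecidableEq α]
    [DecidableEq β] (f : α → β) {A B : Finset α}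
    (h : ∀ c, #{a ∈ A | f a = c} = #{a ∈ B | f a = c}) :
    ∃ π : Equiv.Perm α, (∀ a, f (π a) = f a) ∧ A.image π = B := by
  induction A using Finset.induction_on generalizing B with
  | empty =>
    refine ⟨1, fun _ => rfl, ?_⟩
    rw [image_empty, eq_comm, eq_empty_iff_forall_notMem]
    intro b hb
    have := h (f b)
    rw [filter_empty, card_empty, eq_comm, card_eq_zero, filter_eq_empty_iff] at this
    exact this hb rfl
  | insert a A ha ih =>
    obtain ⟨b, hbB, hfb⟩ : ∃ b ∈ B, f b = f a := by
      have hpos : 0 < #{b ∈ B | f b = f a} := by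
        rw [← h]
        exact card_pos.2 ⟨a, by simp⟩
      obtain ⟨b, hb⟩ := card_pos.1 hpos
      exact ⟨b, mem_filter.1 hb⟩
    -- send `a` to a point `b ∈ B` of its fibre by composing with the swap of `π a` and `b`
    obtain ⟨π, hπf, hπA⟩ := ih (B := B.erase b) fun c => by
      have := h c
      rw [filter_insert] at this
      rw [filter_erase]
      split_ifs at this with hc
      · rw [card_insert_of_notMem (by simp [ha])] at this
        rw [card_erase_of_mem (by simp [hbB, hfb, hc])]
        omega
      · rwa [erase_eq_of_notMem (by simp [hfb, hc])]
    have hπa : π a ∉ B.erase b := by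
      rw [← hπA, π.injective.mem_finset_image]
      exact ha
    have hswap : ∀ z, f (Equiv.swap (π a) b z) = f z := fun z => by
      rw [Equiv.swap_apply_def]
      split_ifs with h₁ h₂
      · rw [h₁, hfb, hπf]
      · rw [h₂, hfb, hπf]
      · rfl
    refine ⟨π.trans (Equiv.swap (π a) b), fun a' => ?_, ?_⟩
    · rw [Equiv.trans_apply, hswap, hπf]
    · have hfix : (B.erase b).image (Equiv.swap (π a) b) = B.erase b := by
        refine (image_congr fun z hz => ?_).trans image_id'
        exact Equiv.swap_apply_of_ne_of_ne (ne_of_mem_of_not_mem hz hπa)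
          (mem_erase.1 hz).1
      rw [Equiv.coe_trans, ← image_image, image_insert, hπA, image_insert, hfix,
        Equiv.swap_apply_left, insert_erase hbB]

theorem card_filter_decide_and_comm {α : Type*} [DecidableEq α] (s : Finset α)
    {p q : α → Prop} [DecidablePred p] [DecidablePred q]
    (h : #(s.filter p) = #(s.filter q)) (a b : Bool) :
    #{z ∈ s | decide (q z) = a ∧ decide (p z) = b} =
      #{z ∈ s | decide (p z) = a ∧ decide (q z) = b} := by
  have hpq := card_sdiff_comm h
  rw [← filter_and_not, ← filter_and_not] at hpq
  cases a <;> cases b <;> simp only [decide_eq_true_eq, decide_eq_false_iff_not, and_comm, hpq]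

end Finset

theorem Equiv.Perm.pred_apply_iff_of_forall_imp {α : Type*} [Finite α] (π : Equiv.Perm α)
    {p : α → Prop} (h : ∀ a, p a → p (π a)) (a : α) : p (π a) ↔ p a := by
  refine ⟨fun ha => ?_, h a⟩
  have hbij := ((Set.toFinite {a | p a}).injOn_iff_bijOn_of_mapsTo h).1 π.injective.injOn
  obtain ⟨b, hb, hba⟩ := hbij.surjOn ha
  rwa [← π.injective hba]

namespace SocRank

open CoalRanking Finset

section LexOrder

variable {α : Type*} [LinearOrder α]

theorem cons_le_cons_iff {a b : α} {l m : List α} :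
    a :: l ≤ b :: m ↔ a < b ∨ a = b ∧ l ≤ m := by
  simp only [le_iff_lt_or_eq (a := a :: l), le_iff_lt_or_eq (a := l), List.cons_lt_cons_iff,
    List.cons.injEq]
  tauto

theorem lexGE_iff_le : ∀ a b : List ℕ, lexGE a b ↔ b ≤ a
  | [], [] | _ :: _, [] => iff_of_true trivial (by simp [le_iff_lt_or_eq])
  | [], _ :: _ => iff_of_false id (by simp [le_iff_lt_or_eq])
  | a :: as, b :: bs => by
    rw [lexGE, cons_le_cons_iff, lexGE_iff_le as bs, eq_comm]

theorem append_lt_append_of_lt : ∀ {p q : List α} (u v : List α),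
    q.length = p.length → q < p → q ++ v < p ++ u
  | [], [], _, _, _, h => absurd h (lt_irrefl _)
  | a :: p, b :: q, u, v, hl, h => by
    rw [List.cons_lt_cons_iff] at h
    rw [List.cons_append, List.cons_append, List.cons_lt_cons_iff]
    rcases h with h | ⟨rfl, h⟩
    · exact Or.inl h
    · exact Or.inr ⟨rfl, append_lt_append_of_lt u v (by simpa using hl) h⟩

theorem lt_or_eq_and_lt_of_append_lt {p q u v : List α} (hl : q.length = p.length)
    (h : q ++ v < p ++ u) : q < p ∨ q = p ∧ v < u := by
  rcases lt_trichotomy q p with hqp | rfl | hpq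
  · exact Or.inl hqp
  · induction q with
    | nil => exact Or.inr ⟨rfl, h⟩
    | cons a q ih =>
      simp only [List.cons_append, List.cons_lt_cons_iff, lt_irrefl, true_and, false_or] at h
      simpa using ih (by simp) h
  · exact absurd h (append_lt_append_of_lt v u hl.symm hpq).asymm

end LexOrder

def LexStrictMono (op : List ℕ → List ℕ → List ℕ) : Prop :=
  ∀ p q u v : List ℕ, q.length = p.length → v.length = u.length → q ≤ p → v ≤ u →
    q < p ∨ v < u → op q v < op p u

theorem append_lexStrictMono : LexStrictMono (· ++ ·) := by
  rintro p q u v hl - hqp - (h | h)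
  · exact append_lt_append_of_lt u v hl h
  · obtain h' | rfl := hqp.lt_or_eq
    · exact append_lt_append_of_lt u v hl h'
    · exact List.append_left_lt h

def padAdd : List ℕ → List ℕ → List ℕ
  | [], m => m
  | l, [] => l
  | a :: l, b :: m => (a + b) :: padAdd l m

@[simp] theorem padAdd_nil_right (l : List ℕ) : padAdd l [] = l := by cases l <;> rfl

theorem padAdd_lexStrictMono : LexStrictMono padAdd
  | [], [], _, _, _, _, _, _, h => by simpa [padAdd] using h
  | _ :: _, _ :: _, [], [], _, _, _, _, h => by simpa using h
  | a :: p, b :: q, c :: u, d :: v, hl, hl', hqp, hvu, h => by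
    simp only [padAdd, List.cons_lt_cons_iff, cons_le_cons_iff] at hqp hvu h ⊢
    rcases hqp with hba | ⟨rfl, hqp⟩
    · rcases hvu with hdc | ⟨rfl, -⟩ <;> exact Or.inl (by omega)
    rcases hvu with hdc | ⟨rfl, hvu⟩
    · exact Or.inl (by omega)
    refine Or.inr ⟨rfl, padAdd_lexStrictMono p q u v (by simpa using hl) (by simpa using hl')
      hqp hvu ?_⟩
    simpa using h

namespace CoalRanking

variable {X : Type*}

theorem ext {r s : CoalRanking X} (h : r.classes = s.classes) : r = s := by
  cases r; cases s; cases h; rfl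

def ofSublist (r : CoalRanking X) (L : List (Finset (Finset X))) (h : L.Sublist r.classes) :
    CoalRanking X where
  classes := L
  class_nonempty C hC := r.class_nonempty C (h.subset hC)
  coal_nonempty C hC := r.coal_nonempty C (h.subset hC)
  classes_disjoint := r.classes_disjoint.sublist h

def singleton (C : Finset (Finset X)) (hC : C.Nonempty) (hS : ∀ S ∈ C, S.Nonempty) :
    CoalRanking X where
  classes := [C]
  class_nonempty := by simpa using hC
  coal_nonempty := by simpa using hS
  classes_disjoint := List.pairwise_singleton _ _

theorem induction_snoc {motive : CoalRanking X → Prop}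
    (nil : ∀ r : CoalRanking X, r.classes = [] → motive r)
    (snoc : ∀ (r r₀ rG : CoalRanking X) (G : Finset (Finset X)),
      r.classes = r₀.classes ++ rG.classes → rG.classes = [G] → motive r₀ → motive r)
    (r : CoalRanking X) : motive r := by
  obtain ⟨L, hL⟩ : ∃ L, r.classes = L := ⟨_, rfl⟩
  induction L using List.reverseRecOn generalizing r with
  | nil => exact nil r hL
  | append_singleton L G ih =>
    exact snoc r (r.ofSublist L (hL ▸ List.sublist_append_left L [G]))
      (r.ofSublist [G] (hL ▸ List.sublist_append_right L [G])) G hL rfl (ih _ rfl)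

variable [DecidableEq X]

theorem mem_domain {r : CoalRanking X} {S : Finset X} :
    S ∈ r.domain ↔ ∃ C ∈ r.classes, S ∈ C := by
  rw [domain]
  induction r.classes with
  | nil => simp
  | cons C L ih => simp [ih]

theorem subset_domain {r : CoalRanking X} {C : Finset (Finset X)} (h : C ∈ r.classes) :
    C ⊆ r.domain :=
  fun _ hS => mem_domain.2 ⟨C, h, hS⟩

theorem disjoint_domain_of_classes_eq_append {r r₁ r₂ : CoalRanking X}
    (h : r.classes = r₁.classes ++ r₂.classes) : Disjoint r₁.domain r₂.domain := by
  have hpw := r.classes_disjoint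
  rw [h, List.pairwise_append] at hpw
  refine disjoint_left.2 fun S h₁ h₂ => ?_
  obtain ⟨C₁, hC₁, hS₁⟩ := mem_domain.1 h₁
  obtain ⟨C₂, hC₂, hS₂⟩ := mem_domain.1 h₂
  exact disjoint_left.1 (hpw.2.2 C₁ hC₁ C₂ hC₂) hS₁ hS₂

theorem isConcatSum_of_classes_eq_append {r r₁ r₂ : CoalRanking X}
    (h : r.classes = r₁.classes ++ r₂.classes) : IsConcatSum r r₁ r₂ :=
  ⟨disjoint_domain_of_classes_eq_append h, h⟩

def append (r₁ r₂ : CoalRanking X) (h : Disjoint r₁.domain r₂.domain) : CoalRanking X where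
  classes := r₁.classes ++ r₂.classes
  class_nonempty C hC :=
    (List.mem_append.1 hC).elim (r₁.class_nonempty C) (r₂.class_nonempty C)
  coal_nonempty C hC :=
    (List.mem_append.1 hC).elim (r₁.coal_nonempty C) (r₂.coal_nonempty C)
  classes_disjoint := List.pairwise_append.2 ⟨r₁.classes_disjoint, r₂.classes_disjoint,
    fun _ h₁ _ h₂ => h.mono (subset_domain h₁) (subset_domain h₂)⟩

theorem domain_of_classes_eq_singleton {r : CoalRanking X} {C : Finset (Finset X)}
    (h : r.classes = [C]) : r.domain = C := by
  simp [domain, h]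

end CoalRanking

section

variable {X : Type*} {R : SRSMap X}

theorem pref_of_consistentAt_of_ind
    (hcomp : ∀ (r : CoalRanking X) (x y : X), R r x y ∨ R r y x)
    {r₁ r₂ r : CoalRanking X} (hc : ConsistentAt R r₁ r₂ r) {x y : X}
    (h₂ : Ind R r₂ x y) (h : Pref R r x y) : Pref R r₁ x y := by
  have hyx : ¬ R r₁ y x := by
    intro hyx
    by_cases hxy : R r₁ x y
    · exact h.2 ((hc x y).1 ⟨hxy, hyx⟩ h₂).2
    · exact h.2 ((hc y x).2.2.1 ⟨hyx, hxy⟩ ⟨h₂.2, h₂.1⟩).1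
  exact ⟨(hcomp r₁ x y).resolve_right hyx, hyx⟩

end

variable {X : Type*} [DecidableEq X]

theorem cnt_union {x : X} {A B : Finset (Finset X)} (h : Disjoint A B) :
    cnt x (A ∪ B) = cnt x A + cnt x B := by
  rw [cnt, filter_union, card_union_of_disjoint (disjoint_filter_filter h)]
  rfl

theorem cnt_pos {x : X} {C : Finset (Finset X)} (h : ∃ S ∈ C, x ∈ S) : 0 < cnt x C := by
  obtain ⟨S, hS, hx⟩ := h
  exact card_pos.2 ⟨S, mem_filter.2 ⟨hS, hx⟩⟩

theorem cnt_eq_zero {x : X} {C : Finset (Finset X)} (h : ∀ S ∈ C, x ∉ S) : cnt x C = 0 := by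
  rw [cnt, card_eq_zero, filter_eq_empty_iff]
  exact h

theorem cnt_image {z z' : X} {g : Finset X → Finset X} (hg : Function.Injective g)
    (h : ∀ S, z ∈ g S ↔ z' ∈ S) (C : Finset (Finset X)) : cnt z (C.image g) = cnt z' C := by
  rw [cnt, filter_image, card_image_of_injective _ hg, cnt]
  simp only [h]

@[simp] theorem length_theta (r : CoalRanking X) (x : X) :
    (theta r x).length = r.classes.length :=
  List.length_map _

theorem theta_of_classes_eq {r : CoalRanking X} {L : List (Finset (Finset X))}
    (h : r.classes = L) (x : X) : theta r x = L.map (cnt x) := by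
  rw [theta, h]

theorem theta_mapPerm (σ : Equiv.Perm X) (r : CoalRanking X) (x : X) :
    theta (r.mapPerm σ) (σ x) = theta r x := by
  rw [theta, mapPerm, List.map_map]
  refine List.map_congr_left fun C _ => cnt_image (image_injective σ.injective)
    (fun S => σ.injective.mem_finset_image) C

theorem theta_mapCoalPerm (π : Equiv.Perm (Finset X))
    (hπ : ∀ S : Finset X, S.Nonempty → (π S).Nonempty) {x : X} (hx : ∀ S, x ∈ π S ↔ x ∈ S)
    (r : CoalRanking X) : theta (r.mapCoalPerm π hπ) x = theta r x := by
  rw [theta, mapCoalPerm, List.map_map]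
  exact List.map_congr_left fun C _ => cnt_image π.injective hx C

theorem map_cnt_zipUnion (x : X) : ∀ L M : List (Finset (Finset X)),
    (∀ A ∈ L, ∀ B ∈ M, Disjoint A B) →
    (zipUnion L M).map (cnt x) = padAdd (L.map (cnt x)) (M.map (cnt x))
  | [], M, _ => by simp [zipUnion, padAdd]
  | A :: L, [], _ => by simp [zipUnion]
  | A :: L, B :: M, h => by
    simp only [zipUnion, List.map_cons, padAdd, cnt_union (h A (by simp) B (by simp))]
    rw [map_cnt_zipUnion x L M fun A' hA B' hB => h A' (by simp [hA]) B' (by simp [hB])]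

theorem theta_of_isConcatSum {r r₁ r₂ : CoalRanking X} (h : IsConcatSum r r₁ r₂) (x : X) :
    theta r x = theta r₁ x ++ theta r₂ x := by
  rw [theta_of_classes_eq h.2, List.map_append]
  rfl

theorem theta_of_isTopAlignedSum {r r₁ r₂ : CoalRanking X} (h : IsTopAlignedSum r r₁ r₂)
    (x : X) : theta r x = padAdd (theta r₁ x) (theta r₂ x) :=
  (theta_of_classes_eq h.2 x).trans <| map_cnt_zipUnion x _ _ fun _ hA _ hB =>
    h.1.mono (subset_domain hA) (subset_domain hB)

theorem lexcel_iff {r : CoalRanking X} {x y : X} : lexcel r x y ↔ theta r y ≤ theta r x :=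
  lexGE_iff_le _ _

theorem ind_lexcel_iff {r : CoalRanking X} {x y : X} :
    Ind lexcel r x y ↔ theta r x = theta r y := by
  rw [Ind, lexcel_iff, lexcel_iff, le_antisymm_iff, and_comm]

theorem pref_lexcel_iff {r : CoalRanking X} {x y : X} :
    Pref lexcel r x y ↔ theta r y < theta r x := by
  rw [Pref, lexcel_iff, lexcel_iff, lt_iff_le_not_ge]

theorem consistentAt_lexcel {op : List ℕ → List ℕ → List ℕ} (hop : LexStrictMono op)
    {r₁ r₂ r : CoalRanking X} (h : ∀ z, theta r z = op (theta r₁ z) (theta r₂ z)) :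
    ConsistentAt lexcel r₁ r₂ r := by
  intro x y
  simp only [ind_lexcel_iff, pref_lexcel_iff, h]
  have hmono := hop (theta r₁ x) (theta r₁ y) (theta r₂ x) (theta r₂ y) (by simp) (by simp)
  refine ⟨fun h₁ h₂ => by rw [h₁, h₂], fun h₁ h₂ => ?_, fun h₁ h₂ => ?_, fun h₁ h₂ => ?_⟩
  · exact hmono h₁.ge h₂.le (Or.inr h₂)
  · exact hmono h₁.le h₂.ge (Or.inl h₁)
  · exact hmono h₁.le h₂.le (Or.inl h₁)

theorem nt_lexcel : NT (lexcel (X := X)) := fun σ r x y => by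
  rw [lexcel_iff, lexcel_iff, theta_mapPerm, theta_mapPerm]

theorem wca_lexcel [Fintype X] : WCA (lexcel (X := X)) := by
  intro x y π hπ hx hy r
  simp only [lexcel_iff, theta_mapCoalPerm π hπ (π.pred_apply_iff_of_forall_imp hx),
    theta_mapCoalPerm π hπ (π.pred_apply_iff_of_forall_imp hy), and_self]

theorem wuvip_lexcel : WUVIP (lexcel (X := X)) := by
  intro r A B hr x y hx hy
  rw [pref_lexcel_iff, theta_of_classes_eq hr, theta_of_classes_eq hr]
  simp only [List.map_cons, List.cons_lt_cons_iff, cnt_eq_zero hy]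
  exact Or.inl (cnt_pos hx)

theorem ccon_lexcel : CCON (lexcel (X := X)) := fun _ _ _ h =>
  consistentAt_lexcel append_lexStrictMono (theta_of_isConcatSum h)

theorem tcon_lexcel : TCON (lexcel (X := X)) := fun _ _ _ h =>
  consistentAt_lexcel padAdd_lexStrictMono (theta_of_isTopAlignedSum h)

theorem iaws_lexcel : IAWS (lexcel (X := X)) := by
  intro r r' G hcl _ x y h
  rw [pref_lexcel_iff] at h ⊢
  rw [theta_of_classes_eq hcl, theta_of_classes_eq hcl, List.map_append, List.map_append]
  exact append_lt_append_of_lt _ _ (by simp) h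

theorem exists_perm_image_swap_image_eq {x y : X} {C : Finset (Finset X)}
    (hC : ∀ S ∈ C, S.Nonempty) (h : cnt x C = cnt y C) :
    ∃ π : Equiv.Perm (Finset X), (∀ S, x ∈ π S ↔ x ∈ S) ∧ (∀ S, y ∈ π S ↔ y ∈ S) ∧
      (∀ S, (π S).Nonempty ↔ S.Nonempty) ∧
      (C.image (·.image (Equiv.swap x y))).image π = C := by
  set τ : Finset X → Finset X := (·.image (Equiv.swap x y))
  have hτ : Function.Injective τ := image_injective (Equiv.swap x y).injective
  have hxτ : ∀ S, x ∈ τ S ↔ y ∈ S := fun S => by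
    conv_lhs => rw [← Equiv.swap_apply_right x y]
    exact (Equiv.swap x y).injective.mem_finset_image
  have hyτ : ∀ S, y ∈ τ S ↔ x ∈ S := fun S => by
    conv_lhs => rw [← Equiv.swap_apply_left x y]
    exact (Equiv.swap x y).injective.mem_finset_image
  -- the swap only exchanges the fibres `(true, false, _)` and `(false, true, _)` of `f`,
  -- whose sizes in `C` agree since `cnt x C = cnt y C`
  let f (S : Finset X) : Bool × Bool × Bool :=
    (decide (x ∈ S), decide (y ∈ S), decide S.Nonempty)
  have hfib : ∀ c, #{S ∈ C.image τ | f S = c} = #{S ∈ C | f S = c} := by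
    rintro ⟨a, b, n⟩
    rw [filter_image, card_image_of_injective _ hτ]
    simp only [f, hxτ, hyτ, τ, image_nonempty, Prod.mk.injEq]
    have hne : ∀ S ∈ C, decide S.Nonempty = true := fun S hS => decide_eq_true (hC S hS)
    rw [filter_congr fun S hS => by rw [hne S hS]]
    conv_rhs => rw [filter_congr fun S hS => by rw [hne S hS]]
    cases n
    · simp
    · simpa only [Bool.true_eq, and_true] using card_filter_decide_and_comm C h a b
  obtain ⟨π, hπ, hπC⟩ := exists_perm_image_eq_of_card_filter_eq f hfib
  have hπ' : ∀ S, (x ∈ π S ↔ x ∈ S) ∧ (y ∈ π S ↔ y ∈ S) ∧ ((π S).Nonempty ↔ S.Nonempty) :=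
    fun S => by
      simpa only [f, Prod.mk.injEq, decide_eq_decide] using hπ S
  exact ⟨π, fun S => (hπ' S).1, fun S => (hπ' S).2.1, fun S => (hπ' S).2.2, hπC⟩

variable {R : SRSMap X}

theorem ind_of_mapCoalPerm_mapPerm_swap_eq
    (hcomp : ∀ (r : CoalRanking X) (x y : X), R r x y ∨ R r y x) (hNT : NT R) (hWCA : WCA R)
    {r : CoalRanking X} {x y : X} (π : Equiv.Perm (Finset X))
    (hπ : ∀ S : Finset X, S.Nonempty → (π S).Nonempty)
    (hx : ∀ S : Finset X, x ∈ S → x ∈ π S) (hy : ∀ S : Finset X, y ∈ S → y ∈ π S)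
    (h : (r.mapPerm (Equiv.swap x y)).mapCoalPerm π hπ = r) : Ind R r x y := by
  have hNT' := hNT (Equiv.swap x y) r x y
  rw [Equiv.swap_apply_left, Equiv.swap_apply_right] at hNT'
  have hWCA' := (hWCA x y π hπ hx hy (r.mapPerm (Equiv.swap x y))).2
  rw [h] at hWCA'
  have hsymm : R r x y ↔ R r y x := hNT'.symm.trans hWCA'.symm
  rcases hcomp r x y with hxy | hyx
  · exact ⟨hxy, hsymm.1 hxy⟩
  · exact ⟨hsymm.2 hyx, hyx⟩

theorem ind_of_classes_eq_nil
    (hcomp : ∀ (r : CoalRanking X) (x y : X), R r x y ∨ R r y x) (hNT : NT R) (hWCA : WCA R)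
    {r : CoalRanking X} (hr : r.classes = []) (x y : X) : Ind R r x y :=
  ind_of_mapCoalPerm_mapPerm_swap_eq hcomp hNT hWCA (Equiv.refl _) (fun _ h => h)
    (fun _ h => h) (fun _ h => h) (CoalRanking.ext (by simp [mapCoalPerm, mapPerm, hr]))

theorem ind_of_classes_eq_singleton
    (hcomp : ∀ (r : CoalRanking X) (x y : X), R r x y ∨ R r y x) (hNT : NT R) (hWCA : WCA R)
    {r : CoalRanking X} {C : Finset (Finset X)} (hr : r.classes = [C]) {x y : X}
    (h : cnt x C = cnt y C) : Ind R r x y := by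
  obtain ⟨π, hπx, hπy, hπne, hπC⟩ :=
    exists_perm_image_swap_image_eq (r.coal_nonempty C (by simp [hr])) h
  exact ind_of_mapCoalPerm_mapPerm_swap_eq hcomp hNT hWCA π (fun S => (hπne S).2)
    (fun S => (hπx S).2) (fun S => (hπy S).2)
    (CoalRanking.ext (by simp [mapCoalPerm, mapPerm, hr, hπC]))

theorem ind_of_theta_eq
    (hcomp : ∀ (r : CoalRanking X) (x y : X), R r x y ∨ R r y x) (hNT : NT R) (hWCA : WCA R)
    (hCCON : CCON R) (r : CoalRanking X) {x y : X} (h : theta r x = theta r y) :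
    Ind R r x y := by
  induction r using CoalRanking.induction_snoc generalizing x y with
  | nil r hr => exact ind_of_classes_eq_nil hcomp hNT hWCA hr x y
  | snoc r r₀ rG G hcl hG ih =>
    have hsum := isConcatSum_of_classes_eq_append hcl
    rw [theta_of_isConcatSum hsum, theta_of_isConcatSum hsum] at h
    obtain ⟨h₀, hG'⟩ := List.append_inj h (by simp)
    rw [theta_of_classes_eq hG, theta_of_classes_eq hG] at hG'
    exact (hCCON r₀ rG r hsum x y).1 (ih h₀)
      (ind_of_classes_eq_singleton hcomp hNT hWCA hG (by simpa using hG'))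

theorem pref_of_classes_eq_singleton_of_forall_notMem
    (hcomp : ∀ (r : CoalRanking X) (x y : X), R r x y ∨ R r y x) (hNT : NT R) (hWCA : WCA R)
    (hWUVIP : WUVIP R) (hCCON : CCON R) {r : CoalRanking X} {C : Finset (Finset X)}
    (hr : r.classes = [C]) {x y : X} (hx : ∃ S ∈ C, x ∈ S) (hy : ∀ S ∈ C, y ∉ S) :
    Pref R r x y := by
  -- WUVIP applies to `C` followed by the class `{{x, y}}`, on which `x` and `y` tie
  let rT := CoalRanking.singleton {{x, y}} (singleton_nonempty _) (by simp)
  have hdisj : Disjoint r.domain rT.domain := by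
    rw [domain_of_classes_eq_singleton hr, domain_of_classes_eq_singleton rfl,
      disjoint_singleton_right]
    exact fun hT => hy _ hT (by simp)
  have hT : Ind R rT x y := ind_of_classes_eq_singleton hcomp hNT hWCA rfl
    (by simp [cnt, filter_singleton])
  refine pref_of_consistentAt_of_ind hcomp (hCCON r rT (r.append rT hdisj) ⟨hdisj, rfl⟩) hT
    (hWUVIP _ C {{x, y}} ?_ x y hx hy)
  simp [CoalRanking.append, hr, rT, CoalRanking.singleton]

theorem pref_of_classes_eq_singleton
    (hcomp : ∀ (r : CoalRanking X) (x y : X), R r x y ∨ R r y x) (hNT : NT R) (hWCA : WCA R)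
    (hWUVIP : WUVIP R) (hCCON : CCON R) (hTCON : TCON R) {r : CoalRanking X}
    {C : Finset (Finset X)} (hr : r.classes = [C]) {x y : X} (h : cnt y C < cnt x C) :
    Pref R r x y := by
  have hCne : ∀ S ∈ C, S.Nonempty := r.coal_nonempty C (by simp [hr])
  -- `B` has only coalitions containing `x` but not `y`, as many as the surplus of `x`,
  -- so that `x` and `y` tie on `C \ B`
  obtain ⟨B, hBsub, hBcard⟩ :
      ∃ B ⊆ C.filter (fun S => x ∈ S ∧ y ∉ S), #B = cnt x C - cnt y C := by
    refine exists_subset_card_eq ?_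
    have hsub :
        C.filter (x ∈ ·) ⊆ C.filter (y ∈ ·) ∪ C.filter (fun S => x ∈ S ∧ y ∉ S) := by
      intro S
      simp only [mem_filter, mem_union]
      tauto
    have := (card_le_card hsub).trans (card_union_le _ _)
    rw [cnt, cnt]
    omega
  have hBC : B ⊆ C := hBsub.trans (filter_subset _ _)
  have hB : ∀ S ∈ B, x ∈ S ∧ y ∉ S := fun S hS => (mem_filter.1 (hBsub hS)).2
  have hxB : ∃ S ∈ B, x ∈ S := by
    obtain ⟨S, hS⟩ := card_pos.1 (by omega : 0 < #B)
    exact ⟨S, hS, (hB S hS).1⟩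
  have hyB : ∀ S ∈ B, y ∉ S := fun S hS => (hB S hS).2
  have hunion : (C \ B) ∪ B = C := sdiff_union_of_subset hBC
  obtain hA | hA := (C \ B).eq_empty_or_nonempty
  · rw [hA, empty_union] at hunion
    exact pref_of_classes_eq_singleton_of_forall_notMem hcomp hNT hWCA hWUVIP hCCON hr
      (hunion ▸ hxB) (hunion ▸ hyB)
  have hcntA : cnt x (C \ B) = cnt y (C \ B) := by
    have hx := cnt_union (x := x) (sdiff_disjoint (s := B) (t := C))
    have hy := cnt_union (x := y) (sdiff_disjoint (s := B) (t := C))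
    rw [hunion] at hx hy
    rw [cnt_eq_zero hyB] at hy
    have : cnt x B = #B := by rw [cnt, filter_true_of_mem fun S hS => (hB S hS).1]
    omega
  let rA := CoalRanking.singleton (C \ B) hA fun S hS => hCne S (mem_sdiff.1 hS).1
  let rB := CoalRanking.singleton B (card_pos.1 (by omega)) fun S hS => hCne S (hBC hS)
  have hsum : IsTopAlignedSum r rA rB := by
    refine ⟨?_, ?_⟩
    · rw [domain_of_classes_eq_singleton rfl, domain_of_classes_eq_singleton rfl]
      exact sdiff_disjoint
    · simp [hr, rA, rB, CoalRanking.singleton, zipUnion, hunion]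
  exact (hTCON rA rB r hsum x y).2.1 (ind_of_classes_eq_singleton hcomp hNT hWCA rfl hcntA)
    (pref_of_classes_eq_singleton_of_forall_notMem hcomp hNT hWCA hWUVIP hCCON rfl hxB hyB)

theorem pref_of_theta_lt
    (hcomp : ∀ (r : CoalRanking X) (x y : X), R r x y ∨ R r y x) (hNT : NT R) (hWCA : WCA R)
    (hWUVIP : WUVIP R) (hCCON : CCON R) (hTCON : TCON R) (hIAWS : IAWS R)
    (r : CoalRanking X) {x y : X} (h : theta r y < theta r x) : Pref R r x y := by
  induction r using CoalRanking.induction_snoc generalizing x y with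
  | nil r hr =>
    rw [theta_of_classes_eq hr, theta_of_classes_eq hr] at h
    exact absurd h (lt_irrefl _)
  | snoc r r₀ rG G hcl hG ih =>
    have hsum := isConcatSum_of_classes_eq_append hcl
    rw [theta_of_isConcatSum hsum, theta_of_isConcatSum hsum] at h
    rcases lt_or_eq_and_lt_of_append_lt (by simp) h with h₀ | ⟨h₀, hG'⟩
    · refine hIAWS r₀ r G (hcl.trans (by rw [hG])) (fun S hS hS₀ => ?_) x y (ih h₀)
      exact disjoint_left.1 hsum.1 hS₀ (subset_domain (by simp [hG]) hS)
    · rw [theta_of_classes_eq hG, theta_of_classes_eq hG] at hG'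
      exact (hCCON r₀ rG r hsum x y).2.1
        (ind_of_theta_eq hcomp hNT hWCA hCCON r₀ h₀.symm)
        (pref_of_classes_eq_singleton hcomp hNT hWCA hWUVIP hCCON hTCON hG
          (by simpa [List.cons_lt_cons_iff] using hG'))

theorem eq_lexcel_of_theta (hind : ∀ r (x y : X), theta r x = theta r y → Ind R r x y)
    (hpref : ∀ r (x y : X), theta r y < theta r x → Pref R r x y) : R = lexcel := by
  funext r x y
  rw [eq_iff_iff, lexcel_iff]
  rcases lt_trichotomy (theta r y) (theta r x) with h | h | h
  · exact iff_of_true (hpref r x y h).1 h.le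
  · exact iff_of_true (hind r x y h.symm).1 h.le
  · exact iff_of_false (hpref r y x h).2 h.not_ge

end SocRank

open SocRank

theorem lexcel_characterization_general {X : Type*} [DecidableEq X] [Fintype X]
    (R : SRSMap X)
    (hcomp : ∀ (r : CoalRanking X) (x y : X), R r x y ∨ R r y x) :
    (NT R ∧ WCA R ∧ WUVIP R ∧ CCON R ∧ TCON R ∧ IAWS R) ↔ R = lexcel := by
  refine ⟨fun ⟨hNT, hWCA, hWUVIP, hCCON, hTCON, hIAWS⟩ => ?_, ?_⟩
  · exact eq_lexcel_of_theta (fun r _ _ => ind_of_theta_eq hcomp hNT hWCA hCCON r)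
      (fun r _ _ => pref_of_theta_lt hcomp hNT hWCA hWUVIP hCCON hTCON hIAWS r)
  · rintro rfl
    exact ⟨nt_lexcel, wca_lexcel, wuvip_lexcel, ccon_lexcel, tcon_lexcel, iaws_lexcel⟩

/-- an SRS satisfies NT, WCA, WUVIP, CCON, TCON and IAWS iff it is
the lex-cel. -/
theorem lexcel_characterization {X : Type*} [DecidableEq X] [Fintype X]
    (hX : 3 ≤ Fintype.card X) (R : SRSMap X)
    (hrefl : ∀ (r : CoalRanking X) (x : X), R r x x)
    (hcomp : ∀ (r : CoalRanking X) (x y : X), R r x y ∨ R r y x) :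
    (NT R ∧ WCA R ∧ WUVIP R ∧ CCON R ∧ TCON R ∧ IAWS R) ↔ R = lexcel :=
  lexcel_characterization_general R hcomp
end

section
/- The S lex-cel solution R^SL satisfies weak coalitional anonymity (WCA). -/
open SocRank

section Aux
open SocRank

lemma mem_pi_iff {X : Type*} [DecidableEq X] [Fintype X] (x : X)
    (π : Equiv.Perm (Finset X)) (h : ∀ S : Finset X, x ∈ S → x ∈ π S) :
    ∀ S : Finset X, x ∈ π S ↔ x ∈ S := by
  intro S
  refine ⟨fun hx => ?_, h S⟩
  set A : Finset (Finset X) := Finset.univ.filter (fun T => x ∈ T) with hA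
  have himg : A.image π = A := by
    apply Finset.eq_of_subset_of_card_le
    · intro T hT
      simp only [hA, Finset.mem_image, Finset.mem_filter, Finset.mem_univ, true_and] at hT ⊢
      obtain ⟨U, hU, rfl⟩ := hT
      exact h U hU
    · rw [Finset.card_image_of_injective _ π.injective]
  have hπS : π S ∈ A := by simp [hA, hx]
  rw [← himg] at hπS
  simp only [Finset.mem_image] at hπS
  obtain ⟨T, hT, hTS⟩ := hπS
  have : T = S := π.injective hTS
  subst this
  simpa [hA] using hT

lemma cnt_image_pi {X : Type*} [DecidableEq X] [Fintype X] (x : X)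
    (π : Equiv.Perm (Finset X)) (h : ∀ S : Finset X, x ∈ S → x ∈ π S)
    (C : Finset (Finset X)) : cnt x (C.image π) = cnt x C := by
  unfold cnt
  rw [Finset.filter_image, Finset.card_image_of_injective _ π.injective]
  congr 1
  exact Finset.filter_congr (fun S _ => by simp [mem_pi_iff x π h S])

lemma thetaDot_mapCoalPerm {X : Type*} [DecidableEq X] [Fintype X] (x : X)
    (π : Equiv.Perm (Finset X)) (hπ : ∀ S : Finset X, S.Nonempty → (π S).Nonempty)
    (h : ∀ S : Finset X, x ∈ S → x ∈ π S) (r : CoalRanking X) :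
    thetaDot (r.mapCoalPerm π hπ) x = thetaDot r x := by
  unfold thetaDot theta CoalRanking.mapCoalPerm
  simp only [List.map_map]
  apply List.map_congr_left
  intro C _
  simp [Function.comp, cnt_image_pi x π h C]

end Aux

/-- the S lex-cel satisfies weak coalitional anonymity (WCA). -/
theorem slexcel_wca {X : Type*} [DecidableEq X] [Fintype X]
    (hX : 3 ≤ Fintype.card X) :
    WCA (slexcel : SRSMap X) := by
  intro x y π hπ hx hy r
  unfold slexcel
  rw [thetaDot_mapCoalPerm x π hπ hx r, thetaDot_mapCoalPerm y π hπ hy r]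
  exact ⟨Iff.rfl, Iff.rfl⟩
end
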